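/- Let Ω ⊂ M be a domain with smooth orientable boundary in an n-dimensional weighted Riemannian manifold (M, g, e^{−V}Vol_g). For every u ∈ C_c^∞ with g(N, ∇u) = 0 on ∂Ω, the measure-valued Γ₂ operator satisfies 𝚪₂(u) = (Ric_V(∇u,∇u) + ‖Hess u‖²_{HS}) e^{−V} dVol_g|_Ω + II(∇u,∇u) e^{−V} dH^{n−1}|_{∂Ω}, where Ric_V = Ric + Hess V; in particular the measure-valued Ricci tensor is Ricci_Ω(∇u,∇u) = Ric_V(∇u,∇u) e^{−V} dVol_g|_Ω + II(∇u,∇u) e^{−V} dH^{n−1}|_{∂Ω}. -/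

import Mathlib

noncomputable section
open MeasureTheory Metric Set ENNReal RealInnerProductSpace

variable {n : ℕ}

/-- The gradient of a function on Euclidean space. -/
def egrad (f : EuclideanSpace ℝ (Fin n) → ℝ) (x : EuclideanSpace ℝ (Fin n)) :
    EuclideanSpace ℝ (Fin n) :=
  (InnerProductSpace.toDual ℝ (EuclideanSpace ℝ (Fin n))).symm (fderiv ℝ f x)

/-- The Laplacian of a function on Euclidean space, as the trace of the Hessian. -/
def lap (f : EuclideanSpace ℝ (Fin n) → ℝ) (x : EuclideanSpace ℝ (Fin n)) : ℝ :=
  ∑ i : Fin n, ⟪fderiv ℝ (egrad f) x (EuclideanSpace.single i (1 : ℝ)),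
    EuclideanSpace.single i (1 : ℝ)⟫

/-- `φ` is a (global) smooth defining function for the domain `Ω`:
`Ω = {φ < 0}`, `∂Ω = {φ = 0}` and `∇φ ≠ 0` on `∂Ω`.  This encodes that `Ω` has
smooth orientable `(n-1)`-dimensional boundary; the outward unit normal is
`N = ∇φ/‖∇φ‖`. -/
structure IsDefiningFunction (Ω : Set (EuclideanSpace ℝ (Fin n)))
    (φ : EuclideanSpace ℝ (Fin n) → ℝ) : Prop where
  smooth : ContDiff ℝ (⊤ : ℕ∞) φ
  eq_dom : Ω = {x | φ x < 0}
  eq_bdry : frontier Ω = {x | φ x = 0}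
  grad_ne : ∀ x ∈ frontier Ω, egrad φ x ≠ 0

/-- The outward unit normal vector field associated to a defining function. -/
def outNormal (φ : EuclideanSpace ℝ (Fin n) → ℝ) (x : EuclideanSpace ℝ (Fin n)) :
    EuclideanSpace ℝ (Fin n) :=
  ‖egrad φ x‖⁻¹ • egrad φ x

namespace GammaTwo
variable {u V f φ : EuclideanSpace ℝ (Fin n) → ℝ}

lemma inner_egrad (f : EuclideanSpace ℝ (Fin n) → ℝ) (x w : EuclideanSpace ℝ (Fin n)) :
    ⟪egrad f x, w⟫ = fderiv ℝ f x w := by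
  simp [egrad, InnerProductSpace.toDual_symm_apply]

def ιL : (EuclideanSpace ℝ (Fin n) →L[ℝ] ℝ) →L[ℝ] EuclideanSpace ℝ (Fin n) :=
  (InnerProductSpace.toDual ℝ (EuclideanSpace ℝ (Fin n))).symm.toContinuousLinearEquiv.toContinuousLinearMap

lemma egrad_eq (f : EuclideanSpace ℝ (Fin n) → ℝ) : egrad f = fun x => ιL (fderiv ℝ f x) := rfl

lemma contDiff_egrad (hf : ContDiff ℝ (⊤ : ℕ∞) f) : ContDiff ℝ (⊤ : ℕ∞) (egrad f) := by
  rw [egrad_eq]; exact (ιL.contDiff).comp (hf.fderiv_right (by simp))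

lemma diffAt_egrad (hf : ContDiff ℝ (⊤ : ℕ∞) f) (x : EuclideanSpace ℝ (Fin n)) :
    DifferentiableAt ℝ (egrad f) x := (contDiff_egrad hf).differentiable (by simp) x

lemma hasFDerivAt_egrad (hf : ContDiff ℝ (⊤ : ℕ∞) f) (x : EuclideanSpace ℝ (Fin n)) :
    HasFDerivAt (egrad f) (ιL.comp (fderiv ℝ (fderiv ℝ f) x)) x :=
  (ιL.hasFDerivAt).comp x ((hf.fderiv_right (m := (⊤ : ℕ∞)) (by simp)).differentiable (by simp) x).hasFDerivAt

lemma inner_fderiv_egrad (hf : ContDiff ℝ (⊤ : ℕ∞) f) (x w z : EuclideanSpace ℝ (Fin n)) :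
    ⟪fderiv ℝ (egrad f) x w, z⟫ = fderiv ℝ (fderiv ℝ f) x w z := by
  rw [(hasFDerivAt_egrad hf x).fderiv]
  simp [ιL, InnerProductSpace.toDual_symm_apply]

lemma hess_symm (hf : ContDiff ℝ (⊤ : ℕ∞) f) (x w z : EuclideanSpace ℝ (Fin n)) :
    ⟪fderiv ℝ (egrad f) x w, z⟫ = ⟪fderiv ℝ (egrad f) x z, w⟫ := by
  rw [inner_fderiv_egrad hf, inner_fderiv_egrad hf]
  exact second_derivative_symmetric (fun y => ((hf.differentiable (by simp)) y).hasFDerivAt)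
    (((hf.fderiv_right (m := (⊤ : ℕ∞)) (by simp)).differentiable (by simp) x).hasFDerivAt) w z

lemma third_symm (hf : ContDiff ℝ (⊤ : ℕ∞) f) (x a b : EuclideanSpace ℝ (Fin n)) :
    fderiv ℝ (fderiv ℝ (egrad f)) x a b = fderiv ℝ (fderiv ℝ (egrad f)) x b a :=
  second_derivative_symmetric (f := egrad f) (fun y => (diffAt_egrad hf y).hasFDerivAt)
    (((contDiff_egrad hf).fderiv_right (m := (⊤ : ℕ∞)) (by simp)).differentiable (by simp) x).hasFDerivAt a b

lemma w2_eq : (fun y : EuclideanSpace ℝ (Fin n) => ‖egrad u y‖ ^ 2)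
    = fun y => ⟪egrad u y, egrad u y⟫ := by
  funext y; rw [real_inner_self_eq_norm_sq]

lemma contDiff_w2 (hu : ContDiff ℝ (⊤ : ℕ∞) u) :
    ContDiff ℝ (⊤ : ℕ∞) (fun y : EuclideanSpace ℝ (Fin n) => ‖egrad u y‖ ^ 2) := by
  rw [w2_eq]
  exact (contDiff_egrad hu).inner ℝ (contDiff_egrad hu)

lemma fderiv_w2 (hu : ContDiff ℝ (⊤ : ℕ∞) u) (x w : EuclideanSpace ℝ (Fin n)) :
    fderiv ℝ (fun y : EuclideanSpace ℝ (Fin n) => ‖egrad u y‖ ^ 2) x w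
      = 2 * ⟪fderiv ℝ (egrad u) x w, egrad u x⟫ := by
  rw [w2_eq, fderiv_inner_apply ℝ (diffAt_egrad hu x) (diffAt_egrad hu x) w]
  rw [real_inner_comm (egrad u x)]; ring

lemma egrad_w2 (hu : ContDiff ℝ (⊤ : ℕ∞) u) (x : EuclideanSpace ℝ (Fin n)) :
    egrad (fun y : EuclideanSpace ℝ (Fin n) => ‖egrad u y‖ ^ 2) x
      = (2:ℝ) • fderiv ℝ (egrad u) x (egrad u x) := by
  refine ext_inner_right ℝ fun z => ?_
  rw [inner_egrad, fderiv_w2 hu, inner_smul_left,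
    hess_symm hu x z (egrad u x)]
  norm_num

lemma hasFDerivAt_fderiv_egrad (hu : ContDiff ℝ (⊤ : ℕ∞) u) (x : EuclideanSpace ℝ (Fin n)) :
    HasFDerivAt (fun y => fderiv ℝ (egrad u) y) (fderiv ℝ (fderiv ℝ (egrad u)) x) x :=
  (((contDiff_egrad hu).fderiv_right (m := (⊤ : ℕ∞)) (by simp)).differentiable (by simp) x).hasFDerivAt

lemma lap_w2 (hu : ContDiff ℝ (⊤ : ℕ∞) u) (x : EuclideanSpace ℝ (Fin n)) :
    lap (fun y : EuclideanSpace ℝ (Fin n) => ‖egrad u y‖ ^ 2) x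
      = 2 * (∑ i : Fin n, ⟪fderiv ℝ (fderiv ℝ (egrad u)) x (EuclideanSpace.single i (1:ℝ)) (egrad u x), EuclideanSpace.single i (1:ℝ)⟫)
        + 2 * ∑ i : Fin n, ‖fderiv ℝ (egrad u) x (EuclideanSpace.single i (1:ℝ))‖ ^ 2 := by
  have hg : egrad (fun y : EuclideanSpace ℝ (Fin n) => ‖egrad u y‖ ^ 2)
      = fun y => (2:ℝ) • fderiv ℝ (egrad u) y (egrad u y) := funext fun y => egrad_w2 hu y
  have hder : ∀ x : EuclideanSpace ℝ (Fin n),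
      HasFDerivAt (fun y => fderiv ℝ (egrad u) y (egrad u y))
      ((fderiv ℝ (egrad u) x).comp (fderiv ℝ (egrad u) x)
        + (fderiv ℝ (fderiv ℝ (egrad u)) x).flip (egrad u x)) x := fun x =>
    (hasFDerivAt_fderiv_egrad hu x).clm_apply (diffAt_egrad hu x).hasFDerivAt
  unfold lap
  rw [hg]
  have hfd : ∀ w : EuclideanSpace ℝ (Fin n),
      fderiv ℝ (fun y => (2:ℝ) • fderiv ℝ (egrad u) y (egrad u y)) x w
      = (2:ℝ) • (fderiv ℝ (egrad u) x (fderiv ℝ (egrad u) x w)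
          + fderiv ℝ (fderiv ℝ (egrad u)) x w (egrad u x)) := by
    intro w
    rw [(show HasFDerivAt (fun y => (2:ℝ) • fderiv ℝ (egrad u) y (egrad u y)) _ x from (hder x).const_smul (2:ℝ)).fderiv]
    simp
  simp only [hfd]
  rw [Finset.mul_sum, Finset.mul_sum, ← Finset.sum_add_distrib]
  congr 1; funext i
  rw [inner_smul_left]
  have hs : ⟪fderiv ℝ (egrad u) x (fderiv ℝ (egrad u) x (EuclideanSpace.single i (1:ℝ))),
      EuclideanSpace.single i (1:ℝ)⟫
      = ‖fderiv ℝ (egrad u) x (EuclideanSpace.single i (1:ℝ))‖ ^ 2 := by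
    rw [hess_symm hu, real_inner_self_eq_norm_sq]
  rw [inner_add_left, hs]
  simp only [starRingEnd_apply, star_trivial]; ring

lemma contDiff_lap (hf : ContDiff ℝ (⊤ : ℕ∞) f) : ContDiff ℝ (⊤ : ℕ∞) (lap f) := by
  unfold lap
  refine ContDiff.sum fun i _ => ?_
  exact (((contDiff_egrad hf).fderiv_right (by simp)).clm_apply contDiff_const).inner ℝ contDiff_const

lemma hasFDerivAt_fderiv_egrad_apply (hf : ContDiff ℝ (⊤ : ℕ∞) f) (x z : EuclideanSpace ℝ (Fin n)) :
    HasFDerivAt (fun y => fderiv ℝ (egrad f) y z)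
      ((ContinuousLinearMap.apply ℝ (EuclideanSpace ℝ (Fin n)) z).comp
        (fderiv ℝ (fderiv ℝ (egrad f)) x)) x :=
  ((ContinuousLinearMap.apply ℝ (EuclideanSpace ℝ (Fin n)) z).hasFDerivAt).comp x
    (hasFDerivAt_fderiv_egrad hf x)

lemma fderiv_lap (hf : ContDiff ℝ (⊤ : ℕ∞) f) (x w : EuclideanSpace ℝ (Fin n)) :
    fderiv ℝ (lap f) x w
      = ∑ i : Fin n, ⟪fderiv ℝ (fderiv ℝ (egrad f)) x w (EuclideanSpace.single i (1:ℝ)),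
          EuclideanSpace.single i (1:ℝ)⟫ := by
  unfold lap
  rw [fderiv_fun_sum (fun i _ => by
    exact (((hasFDerivAt_fderiv_egrad_apply hf x (EuclideanSpace.single i (1:ℝ))).differentiableAt).inner
      ℝ (differentiableAt_const _)))]
  rw [ContinuousLinearMap.sum_apply]
  congr 1; funext i
  rw [fderiv_inner_apply ℝ (hasFDerivAt_fderiv_egrad_apply hf x _).differentiableAt
    (differentiableAt_const _) w]
  rw [(hasFDerivAt_fderiv_egrad_apply hf x _).fderiv, fderiv_fun_const]
  simp

lemma contDiff_h (hV : ContDiff ℝ (⊤ : ℕ∞) V) (hu : ContDiff ℝ (⊤ : ℕ∞) u) :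
    ContDiff ℝ (⊤ : ℕ∞) (fun y : EuclideanSpace ℝ (Fin n) => ⟪egrad V y, egrad u y⟫) :=
  (contDiff_egrad hV).inner ℝ (contDiff_egrad hu)

lemma fderiv_h (hV : ContDiff ℝ (⊤ : ℕ∞) V) (hu : ContDiff ℝ (⊤ : ℕ∞) u) (x w : EuclideanSpace ℝ (Fin n)) :
    fderiv ℝ (fun y : EuclideanSpace ℝ (Fin n) => ⟪egrad V y, egrad u y⟫) x w
      = ⟪egrad V x, fderiv ℝ (egrad u) x w⟫ + ⟪fderiv ℝ (egrad V) x w, egrad u x⟫ :=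
  fderiv_inner_apply ℝ (diffAt_egrad hV x) (diffAt_egrad hu x) w

/-- Pointwise Bochner identity. -/
lemma bochner_pt (hu : ContDiff ℝ (⊤ : ℕ∞) u) (hV : ContDiff ℝ (⊤ : ℕ∞) V) (x : EuclideanSpace ℝ (Fin n)) :
    (1 / 2 : ℝ) * (lap (fun y => ‖egrad u y‖ ^ 2) x
        - ⟪egrad V x, egrad (fun y => ‖egrad u y‖ ^ 2) x⟫)
      - ⟪egrad u x, egrad (fun y => lap u y - ⟪egrad V y, egrad u y⟫) x⟫
    = ⟪fderiv ℝ (egrad V) x (egrad u x), egrad u x⟫ +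
        ∑ i : Fin n, ‖fderiv ℝ (egrad u) x (EuclideanSpace.single i (1 : ℝ))‖ ^ 2 := by
  have h1 := lap_w2 hu x
  have h2 : ⟪egrad V x, egrad (fun y : EuclideanSpace ℝ (Fin n) => ‖egrad u y‖ ^ 2) x⟫
      = 2 * ⟪egrad V x, fderiv ℝ (egrad u) x (egrad u x)⟫ := by
    rw [egrad_w2 hu, inner_smul_right]
  have hdiff : DifferentiableAt ℝ (lap u) x := (contDiff_lap hu).differentiable (by simp) x
  have hdiffh : DifferentiableAt ℝ
      (fun y : EuclideanSpace ℝ (Fin n) => ⟪egrad V y, egrad u y⟫) x :=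
    (contDiff_h hV hu).differentiable (by simp) x
  have h3 : ⟪egrad u x, egrad (fun y => lap u y - ⟪egrad V y, egrad u y⟫) x⟫
      = fderiv ℝ (lap u) x (egrad u x)
        - (⟪egrad V x, fderiv ℝ (egrad u) x (egrad u x)⟫
          + ⟪fderiv ℝ (egrad V) x (egrad u x), egrad u x⟫) := by
    rw [real_inner_comm, inner_egrad, fderiv_fun_sub hdiff hdiffh]
    rw [ContinuousLinearMap.sub_apply, fderiv_h hV hu]
  have h4 : (∑ i : Fin n, ⟪fderiv ℝ (fderiv ℝ (egrad u)) x (EuclideanSpace.single i (1:ℝ)) (egrad u x), EuclideanSpace.single i (1:ℝ)⟫)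
      = fderiv ℝ (lap u) x (egrad u x) := by
    rw [fderiv_lap hu]
    exact Finset.sum_congr rfl fun i _ => by rw [third_symm hu]
  have h5 : ⟪egrad V x, fderiv ℝ (egrad u) x (egrad u x)⟫
      = ⟪egrad V x, fderiv ℝ (egrad u) x (egrad u x)⟫ := rfl
  rw [h1, h2, h3, ← h4]
  ring


lemma level_deriv_zero {φ h : EuclideanSpace ℝ (Fin n) → ℝ} (hφs : ContDiff ℝ (⊤ : ℕ∞) φ)
    {x : EuclideanSpace ℝ (Fin n)} (hh : DifferentiableAt ℝ h x)
    (hS : ∀ y, φ y = 0 → h y = 0) (hx : φ x = 0) (hg : egrad φ x ≠ 0)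
    (v : EuclideanSpace ℝ (Fin n)) (hv : ⟪egrad φ x, v⟫ = 0) :
    fderiv ℝ h x v = 0 := by
  set g := egrad φ x with hgdef
  have hc : ‖g‖ ^ 2 ≠ 0 := pow_ne_zero _ (norm_ne_zero_iff.2 hg)
  set L0 : ℝ × ℝ →L[ℝ] EuclideanSpace ℝ (Fin n) :=
    (ContinuousLinearMap.fst ℝ ℝ ℝ).smulRight v + (ContinuousLinearMap.snd ℝ ℝ ℝ).smulRight g
    with hL0def
  have hL0 : ∀ p : ℝ × ℝ, L0 p = p.1 • v + p.2 • g := fun p => rfl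
  set α : ℝ × ℝ → EuclideanSpace ℝ (Fin n) := fun p => x + L0 p with hαdef
  have hα0 : α 0 = x := by simp [hαdef]
  have hαs : ContDiff ℝ (⊤ : ℕ∞) α := contDiff_const.add L0.contDiff
  set Θ : ℝ × ℝ → ℝ × ℝ := fun p => (p.1, φ (α p)) with hΘdef
  have hΘs : ContDiff ℝ (⊤ : ℕ∞) Θ := contDiff_fst.prodMk (hφs.comp hαs)
  set Leq : (ℝ × ℝ) ≃L[ℝ] ℝ × ℝ :=
    (ContinuousLinearEquiv.refl ℝ ℝ).prodCongr
      (ContinuousLinearEquiv.unitsEquivAut ℝ (Units.mk0 (‖g‖ ^ 2) hc)) with hLeqdef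
  have hαd : HasFDerivAt α L0 0 := L0.hasFDerivAt.const_add x
  have hφd : HasFDerivAt φ (fderiv ℝ φ x) x :=
    ((hφs.differentiable (by simp)) x).hasFDerivAt
  have hφd' : HasFDerivAt φ (fderiv ℝ φ x) (α 0) := by rw [hα0]; exact hφd
  have hcomp : HasFDerivAt (fun p => φ (α p)) ((fderiv ℝ φ x).comp L0) 0 :=
    hφd'.comp (0 : ℝ × ℝ) hαd
  have hΘd : HasFDerivAt Θ
      ((ContinuousLinearMap.fst ℝ ℝ ℝ).prod ((fderiv ℝ φ x).comp L0)) 0 :=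
    (hasFDerivAt_fst).prodMk hcomp
  have hMeq : (ContinuousLinearMap.fst ℝ ℝ ℝ).prod ((fderiv ℝ φ x).comp L0)
      = (Leq : (ℝ × ℝ) →L[ℝ] ℝ × ℝ) := by
    apply ContinuousLinearMap.ext
    rintro ⟨a, b⟩
    have h1 : fderiv ℝ φ x v = 0 := by rw [← inner_egrad]; exact hv
    have h2 : fderiv ℝ φ x g = ‖g‖ ^ 2 := by
      rw [← inner_egrad, ← hgdef, real_inner_self_eq_norm_sq]
    have : (fderiv ℝ φ x) (L0 (a, b)) = ‖g‖ ^ 2 * b := by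
      rw [hL0]
      simp [h1, h2]; ring
    simp only [hLeqdef, ContinuousLinearMap.prod_apply, ContinuousLinearEquiv.coe_coe,
      ContinuousLinearEquiv.prodCongr_apply, ContinuousLinearEquiv.refl_apply,
      ContinuousLinearMap.coe_fst', ContinuousLinearMap.coe_comp', Function.comp_apply,
      ContinuousLinearEquiv.unitsEquivAut_apply, Units.val_mk0, Prod.mk.injEq]
    exact ⟨trivial, by rw [this]; ring⟩
  have hstrict : HasStrictFDerivAt Θ (Leq : (ℝ × ℝ) →L[ℝ] ℝ × ℝ) 0 := by
    have h1 : HasStrictFDerivAt Θ (fderiv ℝ Θ 0) 0 := (hΘs.contDiffAt).hasStrictFDerivAt (by simp)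
    rwa [hΘd.fderiv, hMeq] at h1
  set Ξ := hstrict.localInverse Θ Leq 0 with hΞdef
  have hΘ0 : Θ 0 = 0 := by
    rw [hΘdef]; simp [hα0, hx]
  have hri := hstrict.eventually_right_inverse
  rw [hΘ0] at hri
  have htend : Filter.Tendsto (fun t : ℝ => ((t, 0) : ℝ × ℝ)) (nhds 0) (nhds 0) := by
    have : Filter.Tendsto (fun t : ℝ => ((t, 0) : ℝ × ℝ)) (nhds 0) (nhds ((0 : ℝ), (0 : ℝ))) :=
      (continuous_id.prodMk continuous_const).tendsto 0
    exact this
  have hev : ∀ᶠ t : ℝ in nhds 0, Θ (Ξ (t, 0)) = (t, 0) := htend.eventually hri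
  have hΞ0 : Ξ 0 = 0 := by
    have := hstrict.localInverse_apply_image
    rwa [hΘ0] at this
  set σ : ℝ → ℝ := fun t => (Ξ (t, 0)).2 with hσdef
  have hσ0 : σ 0 = 0 := by
    rw [hσdef]; simp [Prod.mk_zero_zero, hΞ0]
  -- derivative of σ at 0 is 0
  have hΞd : HasFDerivAt Ξ (Leq.symm : (ℝ × ℝ) →L[ℝ] ℝ × ℝ) 0 := by
    have := hstrict.to_localInverse.hasFDerivAt
    rwa [hΘ0] at this
  have hlin : HasDerivAt (fun t : ℝ => ((t, 0) : ℝ × ℝ)) (1, 0) 0 :=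
    (hasDerivAt_id 0).prodMk (hasDerivAt_const 0 0)
  have hΞd' : HasFDerivAt Ξ (Leq.symm : (ℝ × ℝ) →L[ℝ] ℝ × ℝ)
      ((fun t : ℝ => ((t, 0) : ℝ × ℝ)) 0) := hΞd
  have hκ : HasDerivAt (fun t : ℝ => Ξ (t, 0)) (Leq.symm (1, 0)) 0 :=
    HasFDerivAt.comp_hasDerivAt (f := fun t : ℝ => ((t, 0) : ℝ × ℝ)) 0 hΞd' hlin
  have hfwd : (Leq : (ℝ × ℝ) →L[ℝ] ℝ × ℝ) ((1 : ℝ), (0 : ℝ)) = (1, 0) := by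
    rw [← hMeq]
    have h1 : fderiv ℝ φ x v = 0 := by rw [← inner_egrad]; exact hv
    have : (fderiv ℝ φ x) (L0 (1, 0)) = 0 := by rw [hL0]; simp [h1]
    simp [this, Prod.ext_iff]
  have hsymm10 : (Leq.symm ((1 : ℝ), (0 : ℝ))) = (1, 0) := by
    have := Leq.symm_apply_apply ((1 : ℝ), (0 : ℝ))
    rw [show Leq ((1 : ℝ), (0 : ℝ)) = ((1 : ℝ), (0 : ℝ)) from hfwd] at this
    exact this
  have hσd : HasDerivAt σ 0 0 := by
    have := (ContinuousLinearMap.snd ℝ ℝ ℝ).hasFDerivAt.comp_hasDerivAt 0 hκ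
    rw [hsymm10] at this
    simpa [hσdef, Function.comp_def] using this
  set p : ℝ → EuclideanSpace ℝ (Fin n) := fun t => x + t • v + σ t • g with hpdef
  have hp0 : p 0 = x := by simp [hpdef, hσ0]
  have hpd : HasDerivAt p v 0 := by
    have h1 : HasDerivAt (fun t : ℝ => t • v) ((1 : ℝ) • v) 0 := (hasDerivAt_id 0).smul_const v
    have h2 : HasDerivAt (fun t : ℝ => σ t • g) ((0 : ℝ) • g) 0 := hσd.smul_const g
    have := ((hasDerivAt_const (0:ℝ) x).add h1).add h2
    simp only [one_smul, zero_smul, zero_add, add_zero] at this; exact this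
  have hev2 : ∀ᶠ t : ℝ in nhds 0, h (p t) = 0 := by
    filter_upwards [hev] with t ht
    have h1 : (Ξ (t, 0)).1 = t := congrArg Prod.fst ht
    have h2 : φ (α (Ξ (t, 0))) = 0 := congrArg Prod.snd ht
    have h3 : α (Ξ (t, 0)) = p t := by
      show x + L0 (Ξ (t, 0)) = x + t • v + σ t • g
      rw [hL0, h1, add_assoc]
    rw [← h3]
    exact hS _ h2
  have hhd : HasFDerivAt h (fderiv ℝ h x) (p 0) := by rw [hp0]; exact hh.hasFDerivAt
  have hchain : HasDerivAt (fun t => h (p t)) (fderiv ℝ h x v) 0 :=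
    hhd.comp_hasDerivAt 0 hpd
  have hzero : HasDerivAt (fun t => h (p t)) 0 0 :=
    (hasDerivAt_const (0:ℝ) (0:ℝ)).congr_of_eventuallyEq hev2
  exact hchain.unique hzero


lemma boundary_pt {Ω : Set (EuclideanSpace ℝ (Fin n))} {φ u : EuclideanSpace ℝ (Fin n) → ℝ}
    (hφ : IsDefiningFunction Ω φ) (hu : ContDiff ℝ (⊤ : ℕ∞) u)
    (hNeumann : ∀ x ∈ frontier Ω, ⟪outNormal φ x, egrad u x⟫ = 0)
    {x : EuclideanSpace ℝ (Fin n)} (hx : x ∈ frontier Ω) :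
    ⟪outNormal φ x, egrad (fun y => ‖egrad u y‖ ^ 2) x⟫
      = (-2) * ⟪fderiv ℝ (outNormal φ) x (egrad u x), egrad u x⟫ := by
  have hg : egrad φ x ≠ 0 := hφ.grad_ne x hx
  have hr : ‖egrad φ x‖ ≠ 0 := norm_ne_zero_iff.2 hg
  have hgv : ⟪egrad φ x, egrad u x⟫ = 0 := by
    have h0 := hNeumann x hx
    unfold outNormal at h0
    rw [real_inner_smul_left] at h0
    exact (mul_eq_zero.1 h0).resolve_left (inv_ne_zero hr)
  have hw2 : ⟪outNormal φ x, egrad (fun y => ‖egrad u y‖ ^ 2) x⟫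
      = 2 * (‖egrad φ x‖⁻¹ * ⟪egrad φ x, fderiv ℝ (egrad u) x (egrad u x)⟫) := by
    rw [egrad_w2 hu]
    unfold outNormal
    rw [real_inner_smul_left, real_inner_smul_right]
    ring
  have hsdiff : DifferentiableAt ℝ (fun y => ‖egrad φ y‖⁻¹) x :=
    ((diffAt_egrad hφ.smooth x).norm ℝ hg).inv hr
  have hNd : HasFDerivAt (outNormal φ)
      ((‖egrad φ x‖⁻¹) • fderiv ℝ (egrad φ) x
        + (fderiv ℝ (fun y => ‖egrad φ y‖⁻¹) x).smulRight (egrad φ x)) x :=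
    hsdiff.hasFDerivAt.smul (diffAt_egrad hφ.smooth x).hasFDerivAt
  have hDN : ⟪fderiv ℝ (outNormal φ) x (egrad u x), egrad u x⟫
      = ‖egrad φ x‖⁻¹ * ⟪fderiv ℝ (egrad φ) x (egrad u x), egrad u x⟫ := by
    rw [hNd.fderiv]
    simp only [ContinuousLinearMap.add_apply, ContinuousLinearMap.coe_smul',
      Pi.smul_apply, ContinuousLinearMap.smulRight_apply]
    rw [inner_add_left, real_inner_smul_left, real_inner_smul_left, hgv]
    ring
  have hS : ∀ y, φ y = 0 → (fun y => ⟪egrad φ y, egrad u y⟫) y = 0 := by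
    intro y hy
    have hyfr : y ∈ frontier Ω := by rw [hφ.eq_bdry]; exact hy
    have h0 := hNeumann y hyfr
    unfold outNormal at h0
    rw [real_inner_smul_left] at h0
    exact (mul_eq_zero.1 h0).resolve_left
      (inv_ne_zero (norm_ne_zero_iff.2 (hφ.grad_ne y hyfr)))
  have hφx : φ x = 0 := by
    have : x ∈ {y | φ y = 0} := hφ.eq_bdry ▸ hx
    exact this
  have htan := level_deriv_zero hφ.smooth
    ((contDiff_h hφ.smooth hu).differentiable (by simp) x) hS hφx hg (egrad u x) hgv
  rw [fderiv_h hφ.smooth hu] at htan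
  rw [hw2, hDN,
    show ⟪fderiv ℝ (egrad φ) x (egrad u x), egrad u x⟫
      = -⟪egrad φ x, fderiv ℝ (egrad u) x (egrad u x)⟫ by linarith]
  ring

end GammaTwo

open GammaTwo

/-- The measure-valued `Γ₂` operator / measure-valued Ricci tensor of the weighted
Euclidean domain `(Ω̄, d_Ω, e^{-V}Vol)` (where `Ric ≡ 0`, so `Ric_V = Hess V`):
tested against an arbitrary `f ∈ C_c^∞`, for any `u ∈ C_c^∞` with Neumann
condition `⟪N, ∇u⟫ = 0` on `∂Ω`,
`𝚪₂(u) = (Hess V(∇u,∇u) + ‖Hess u‖²_HS)·e^{-V}Vol|_Ω + II(∇u,∇u)·e^{-V}H^{n-1}|_{∂Ω}`,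
where `𝚪₂(u) = ½𝚫|∇u|² − ⟪∇u, ∇Δ_V u⟫ e^{-V}Vol` and the measure-valued Laplacian
`𝚫 w = Δ_V w · e^{-V}Vol|_Ω − ⟪N,∇w⟫ e^{-V}H^{n-1}|_{∂Ω}`. -/
theorem measure_valued_gamma_two
    (Ω : Set (EuclideanSpace ℝ (Fin n))) (hΩo : IsOpen Ω)
    (hΩb : Bornology.IsBounded Ω)
    (φ : EuclideanSpace ℝ (Fin n) → ℝ) (hφ : IsDefiningFunction Ω φ)
    (V : EuclideanSpace ℝ (Fin n) → ℝ) (hV : ContDiff ℝ (⊤ : ℕ∞) V)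
    (u : EuclideanSpace ℝ (Fin n) → ℝ) (hu : ContDiff ℝ (⊤ : ℕ∞) u)
    (hucs : HasCompactSupport u)
    (hNeumann : ∀ x ∈ frontier Ω, ⟪outNormal φ x, egrad u x⟫ = 0)
    (f : EuclideanSpace ℝ (Fin n) → ℝ) (hf : ContDiff ℝ (⊤ : ℕ∞) f)
    (hfcs : HasCompactSupport f) :
    (1 / 2) * (∫ x in Ω,
        f x * (lap (fun y => ‖egrad u y‖ ^ 2) x -
          ⟪egrad V x, egrad (fun y => ‖egrad u y‖ ^ 2) x⟫) * Real.exp (-V x)) -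
      (1 / 2) * (∫ x in frontier Ω,
        f x * ⟪outNormal φ x, egrad (fun y => ‖egrad u y‖ ^ 2) x⟫ * Real.exp (-V x)
          ∂(μH[(n : ℝ) - 1])) -
      ∫ x in Ω,
        f x * ⟪egrad u x, egrad (fun y => lap u y - ⟪egrad V y, egrad u y⟫) x⟫ *
          Real.exp (-V x) =
    (∫ x in Ω,
        f x * (⟪fderiv ℝ (egrad V) x (egrad u x), egrad u x⟫ +
          ∑ i : Fin n,
            ‖fderiv ℝ (egrad u) x (EuclideanSpace.single i (1 : ℝ))‖ ^ 2) *
          Real.exp (-V x)) +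
      ∫ x in frontier Ω,
        f x * ⟪fderiv ℝ (outNormal φ) x (egrad u x), egrad u x⟫ * Real.exp (-V x)
          ∂(μH[(n : ℝ) - 1]) := by
  classical
  have hfrontmeas : MeasurableSet (frontier Ω) := isClosed_frontier.measurableSet
  -- boundary term
  have hbpt : Set.EqOn
      (fun x => f x * ⟪outNormal φ x, egrad (fun y => ‖egrad u y‖ ^ 2) x⟫ * Real.exp (-V x))
      (fun x => (-2) * (f x * ⟪fderiv ℝ (outNormal φ) x (egrad u x), egrad u x⟫ *
        Real.exp (-V x))) (frontier Ω) := by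
    intro x hx
    simp only
    rw [boundary_pt hφ hu hNeumann hx]
    ring
  have hB : (∫ x in frontier Ω,
        f x * ⟪outNormal φ x, egrad (fun y => ‖egrad u y‖ ^ 2) x⟫ * Real.exp (-V x)
          ∂(μH[(n : ℝ) - 1]))
      = (-2) * ∫ x in frontier Ω,
        f x * ⟪fderiv ℝ (outNormal φ) x (egrad u x), egrad u x⟫ * Real.exp (-V x)
          ∂(μH[(n : ℝ) - 1]) := by
    rw [setIntegral_congr_fun hfrontmeas hbpt]
    exact integral_const_mul _ _
  -- interior term
  set a : EuclideanSpace ℝ (Fin n) → ℝ := fun x =>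
    f x * (lap (fun y => ‖egrad u y‖ ^ 2) x -
      ⟪egrad V x, egrad (fun y => ‖egrad u y‖ ^ 2) x⟫) * Real.exp (-V x) with ha_def
  set c : EuclideanSpace ℝ (Fin n) → ℝ := fun x =>
    f x * ⟪egrad u x, egrad (fun y => lap u y - ⟪egrad V y, egrad u y⟫) x⟫ *
      Real.exp (-V x) with hc_def
  set d : EuclideanSpace ℝ (Fin n) → ℝ := fun x =>
    f x * (⟪fderiv ℝ (egrad V) x (egrad u x), egrad u x⟫ +
      ∑ i : Fin n, ‖fderiv ℝ (egrad u) x (EuclideanSpace.single i (1 : ℝ))‖ ^ 2) *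
      Real.exp (-V x) with hd_def
  have hkey : ∀ x, (1 / 2 : ℝ) * a x - c x = d x := by
    intro x
    rw [ha_def, hc_def, hd_def]
    simp only
    rw [← bochner_pt hu hV x]
    ring
  have hexpc : Continuous fun x : EuclideanSpace ℝ (Fin n) => Real.exp (-V x) :=
    Real.continuous_exp.comp (hV.continuous.neg)
  have hconta : Continuous a := by
    rw [ha_def]
    exact ((hf.continuous.mul
      (((contDiff_lap (contDiff_w2 hu)).continuous).sub
        (((contDiff_egrad hV).continuous).inner
          ((contDiff_egrad (contDiff_w2 hu)).continuous)))).mul hexpc)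
  have hcontc : Continuous c := by
    rw [hc_def]
    exact ((hf.continuous.mul
      (((contDiff_egrad hu).continuous).inner
        ((contDiff_egrad ((contDiff_lap hu).sub (contDiff_h hV hu))).continuous))).mul hexpc)
  have hcsa : HasCompactSupport a := (hfcs.mul_right).mul_right
  have hcsc : HasCompactSupport c := (hfcs.mul_right).mul_right
  have hIa : IntegrableOn a Ω volume :=
    (hconta.integrable_of_hasCompactSupport hcsa).integrableOn
  have hIc : IntegrableOn c Ω volume :=
    (hcontc.integrable_of_hasCompactSupport hcsc).integrableOn
  have hAC : (1 / 2 : ℝ) * (∫ x in Ω, a x) - (∫ x in Ω, c x) = ∫ x in Ω, d x := by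
    rw [← integral_const_mul ((1:ℝ)/2) a, ← integral_sub (hIa.const_mul _) hIc]
    exact setIntegral_congr_fun hΩo.measurableSet fun x _ => hkey x
  rw [hB]
  linarith [hAC]
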